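/- With s(d,m) ∈ ℤ[q] the generating polynomial of basal billiard partitions with d parts and largest part m: s(d, 2n) = 0 unless n ≤ d ≤ 2n−1, and for n ≤ d ≤ 2n−1 the following identity holds in ℤ[q]: s(d, 2n) · ∏_{i=1}^{2n−d−1}(1 − q^{2i}) · ∏_{i=1}^{d−n}(1 − q^{2i}) = q^{2n² − 2dn − n + d² + 2d} · ∏_{i=1}^{n−1}(1 − q^{2i}). (Equivalently, s(d,2n) = q^{2n²−2dn−n+d²+2d} times the Gaussian binomial coefficient [n−1 choose 2n−d−1] in the variable q².) -/

import Mathlib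

/-!
A basal billiard partition with largest part `2n` contains every even number `2, 4, …, 2n`; its
other parts are odd numbers `2i - 1` with `2 ≤ i ≤ n`, each sitting between `2i` and `2i - 2`.
Removing the largest part (and the odd part below it, if any) gives
`s(d+1, 2n+4) = q^(2n+4) s(d, 2n+2) + q^(4n+7) s(d-1, 2n+2)`. This matches the `q`-Pascal rule,
so `s(n+1+j, 2n+2) = q^((n+1)(n+2) + j(j+2)) [n choose j]_{q²}`.
The product identity is then the factorial formula for the Gaussian binomial coefficient.
-/

/-- An Euclidean billiard partition, recorded as the strictly decreasing list
of its parts: a nonempty strictly decreasing list of positive integers whose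
smallest (last) part is even and in which no two adjacent parts are both odd. -/
def IsEBP (l : List ℕ) : Prop :=
  l ≠ [] ∧ l.Chain' (fun a b => b < a) ∧ (∀ x ∈ l, 0 < x) ∧
    (∀ m ∈ l.getLast?, Even m) ∧ l.Chain' (fun a b => ¬(Odd a ∧ Odd b))

/-- A basal billiard partition: an Euclidean billiard partition whose smallest
part equals `2` and in which adjacent parts differ by at most `2`. -/
def IsBasal (l : List ℕ) : Prop :=
  IsEBP l ∧ l.getLast? = some 2 ∧ l.Chain' (fun a b => a - b ≤ 2)

open Classical Polynomial in
/-- `s d m ∈ ℤ[q]` is the generating polynomial `∑_π q^{|π|}` of basal billiard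
partitions `π` with exactly `d` parts and largest part `m` (such a partition has
all parts `≤ m`, hence is encoded as a function `Fin d → Fin (m+1)`, and each
basal billiard partition with `d` parts and largest part `m` occurs exactly once
in the sum below); in particular `s 0 m = 0`. -/
noncomputable def s (d m : ℕ) : Polynomial ℤ :=
  ∑ f : Fin d → Fin (m + 1),
    if IsBasal (List.ofFn fun i => (f i : ℕ)) ∧
        (List.ofFn fun i => (f i : ℕ)).head? = some m
    then X ^ (List.ofFn fun i => (f i : ℕ)).sum
    else 0

open Polynomial

section GaussianBinomial

variable {R : Type*} [CommRing R] (q : R)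

def qPochhammer (n : ℕ) : R := ∏ i ∈ Finset.Icc 1 n, (1 - q ^ i)

lemma qPochhammer_zero : qPochhammer q 0 = 1 := by simp [qPochhammer]

lemma qPochhammer_succ (n : ℕ) :
    qPochhammer q (n + 1) = qPochhammer q n * (1 - q ^ (n + 1)) :=
  Finset.prod_Icc_succ_top (by omega) _

/-- `n - k` truncates only when `n < k`, where `gaussBinom q n k = 0` anyway. -/
def gaussBinom : ℕ → ℕ → R
  | _, 0 => 1
  | 0, _ + 1 => 0
  | n + 1, k + 1 => gaussBinom n (k + 1) + q ^ (n - k) * gaussBinom n k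

@[simp]
lemma gaussBinom_zero_right (n : ℕ) : gaussBinom q n 0 = 1 := by cases n <;> rfl

lemma gaussBinom_succ_succ (n k : ℕ) :
    gaussBinom q (n + 1) (k + 1) = gaussBinom q n (k + 1) + q ^ (n - k) * gaussBinom q n k :=
  rfl

lemma gaussBinom_eq_zero_of_lt : ∀ {n k : ℕ}, n < k → gaussBinom q n k = 0
  | 0, _ + 1, _ => rfl
  | n + 1, k + 1, h => by
    rw [gaussBinom_succ_succ, gaussBinom_eq_zero_of_lt (by omega),
      gaussBinom_eq_zero_of_lt (by omega), mul_zero, add_zero]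

theorem gaussBinom_mul_qPochhammer_mul_qPochhammer : ∀ {n k : ℕ}, k ≤ n →
    gaussBinom q n k * qPochhammer q k * qPochhammer q (n - k) = qPochhammer q n
  | n, 0, _ => by simp [qPochhammer_zero]
  | n + 1, k + 1, hk => by
    obtain rfl | ⟨a, rfl⟩ : k = n ∨ ∃ a, n = k + 1 + a :=
      (Nat.eq_or_lt_of_le (Nat.le_of_succ_le_succ hk)).imp id fun h => ⟨n - (k + 1), by omega⟩
    · have ih := gaussBinom_mul_qPochhammer_mul_qPochhammer (le_refl k)
      rw [Nat.sub_self, qPochhammer_zero, mul_one] at ih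
      rw [gaussBinom_succ_succ, gaussBinom_eq_zero_of_lt q k.lt_succ_self, Nat.sub_self,
        Nat.sub_self, pow_zero, qPochhammer_zero, qPochhammer_succ]
      linear_combination (1 - q ^ (k + 1)) * ih
    · have ih₁ := gaussBinom_mul_qPochhammer_mul_qPochhammer (show k + 1 ≤ k + 1 + a by omega)
      have ih₂ := gaussBinom_mul_qPochhammer_mul_qPochhammer (show k ≤ k + 1 + a by omega)
      rw [show k + 1 + a - (k + 1) = a by omega, qPochhammer_succ q k] at ih₁
      rw [show k + 1 + a - k = a + 1 by omega, qPochhammer_succ q a] at ih₂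
      rw [gaussBinom_succ_succ, show k + 1 + a - k = a + 1 by omega,
        show k + 1 + a + 1 - (k + 1) = a + 1 by omega, qPochhammer_succ q (k + 1 + a),
        qPochhammer_succ q k, qPochhammer_succ q a]
      linear_combination (1 - q ^ (a + 1)) * ih₁ + q ^ (a + 1) * (1 - q ^ (k + 1)) * ih₂

end GaussianBinomial

lemma isBasal_singleton {a : ℕ} : IsBasal [a] ↔ a = 2 := by
  simp +contextual [IsBasal, IsEBP, List.Chain']

lemma isBasal_cons_cons {a b : ℕ} {t : List ℕ} :
    IsBasal (a :: b :: t) ↔ b < a ∧ a - b ≤ 2 ∧ ¬(Odd a ∧ Odd b) ∧ IsBasal (b :: t) := by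
  simp only [IsBasal, IsEBP, List.Chain', List.isChain_cons_cons, List.getLast?_cons_cons,
    List.mem_cons, forall_eq_or_imp, ne_eq, reduceCtorEq, not_false_eq_true, true_and]
  constructor
  · rintro ⟨⟨⟨h1, h2⟩, ⟨-, h3⟩, h4, ⟨h5, h6⟩⟩, h7, ⟨h8, h9⟩⟩
    exact ⟨h1, h8, h5, ⟨h2, h3, h4, h6⟩, h7, h9⟩
  · rintro ⟨h1, h8, h5, ⟨h2, h3, h4, h6⟩, h7, h9⟩
    exact ⟨⟨⟨h1, h2⟩, ⟨by omega, h3⟩, h4, ⟨h5, h6⟩⟩, h7, ⟨h8, h9⟩⟩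

lemma IsBasal.ne_nil {l : List ℕ} (h : IsBasal l) : l ≠ [] := h.1.1

lemma IsBasal.le_head : ∀ {a : ℕ} {t : List ℕ}, IsBasal (a :: t) → ∀ x ∈ a :: t, x ≤ a
  | _, [], _, _, hx => (List.mem_singleton.mp hx).le
  | a, b :: t, h, x, hx => by
    obtain ⟨hba, -, -, h'⟩ := isBasal_cons_cons.mp h
    rcases List.mem_cons.mp hx with rfl | hx
    · rfl
    · exact (h'.le_head x hx).trans hba.le

lemma IsBasal.two_le : ∀ {l : List ℕ}, IsBasal l → ∀ x ∈ l, 2 ≤ x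
  | [], h, _, _ => absurd rfl h.ne_nil
  | [a], h, x, hx => by rw [List.mem_singleton.mp hx, isBasal_singleton.mp h]
  | a :: b :: t, h, x, hx => by
    obtain ⟨hba, -, -, h'⟩ := isBasal_cons_cons.mp h
    rcases List.mem_cons.mp hx with rfl | hx
    · exact (h'.two_le b List.mem_cons_self).trans hba.le
    · exact h'.two_le x hx

open Classical in
noncomputable def basalFinset (d m : ℕ) : Finset (List ℕ) :=
  ((Finset.univ : Finset (Fin d → Fin (m + 1))).image
    fun f => List.ofFn fun i => (f i : ℕ)).filter fun l => IsBasal l ∧ l.head? = some m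

lemma mem_basalFinset {d m : ℕ} {l : List ℕ} :
    l ∈ basalFinset d m ↔ l.length = d ∧ IsBasal l ∧ l.head? = some m := by
  simp only [basalFinset, Finset.mem_filter, Finset.mem_image, Finset.mem_univ, true_and,
    and_congr_left_iff]
  rintro ⟨hl, hhead⟩
  constructor
  · rintro ⟨f, rfl⟩
    exact List.length_ofFn
  · rintro rfl
    obtain ⟨t, rfl⟩ := List.head?_eq_some_iff.mp hhead
    exact ⟨fun i => ⟨_, Nat.lt_succ_of_le (hl.le_head _ (List.getElem_mem i.isLt))⟩,
      List.ofFn_getElem⟩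

open Classical in
lemma s_eq_sum_basalFinset (d m : ℕ) : s d m = ∑ l ∈ basalFinset d m, (X : ℤ[X]) ^ l.sum := by
  rw [s, basalFinset, Finset.sum_filter, Finset.sum_image]
  intro f _ g _ h
  funext i
  exact Fin.ext (by simpa using congrFun (List.ofFn_injective h) i)

lemma isBasal_cons_iff {n : ℕ} {t : List ℕ} :
    IsBasal ((2 * n + 4) :: t) ↔ (IsBasal t ∧ t.head? = some (2 * n + 2)) ∨
      ∃ u, t = (2 * n + 3) :: u ∧ IsBasal u ∧ u.head? = some (2 * n + 2) := by
  have not_odd_odd (a b : ℕ) (h : a % 2 = 0 ∨ b % 2 = 0) : ¬(Odd a ∧ Odd b) := by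
    rw [Nat.odd_iff, Nat.odd_iff]; omega
  constructor
  · intro h
    obtain _ | ⟨b, t⟩ := t
    · have := isBasal_singleton.mp h; omega
    obtain ⟨hb, hgap, -, ht⟩ := isBasal_cons_cons.mp h
    obtain rfl | rfl : b = 2 * n + 2 ∨ b = 2 * n + 3 := by omega
    · exact .inl ⟨ht, rfl⟩
    obtain _ | ⟨c, u⟩ := t
    · have := isBasal_singleton.mp ht; omega
    obtain ⟨hc, hgap', hodd, hu⟩ := isBasal_cons_cons.mp ht
    obtain rfl : c = 2 * n + 2 := by
      by_contra hc'
      exact hodd ⟨⟨n + 1, by ring⟩, ⟨n, by omega⟩⟩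
    exact .inr ⟨_, rfl, hu, rfl⟩
  · rintro (⟨ht, hhead⟩ | ⟨u, rfl, hu, hhead⟩)
    · obtain ⟨t, rfl⟩ := List.head?_eq_some_iff.mp hhead
      exact isBasal_cons_cons.mpr ⟨by omega, by omega, not_odd_odd _ _ (by omega), ht⟩
    · obtain ⟨u, rfl⟩ := List.head?_eq_some_iff.mp hhead
      exact isBasal_cons_cons.mpr ⟨by omega, by omega, not_odd_odd _ _ (by omega),
        isBasal_cons_cons.mpr ⟨by omega, by omega, not_odd_odd _ _ (by omega), hu⟩⟩

lemma basalFinset_succ_two_mul_add_four (d n : ℕ) :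
    basalFinset (d + 1) (2 * n + 4) =
      (basalFinset d (2 * n + 2)).map ⟨List.cons (2 * n + 4), List.cons_injective⟩ ∪
        (basalFinset (d - 1) (2 * n + 2)).map
          ⟨List.cons (2 * n + 4) ∘ List.cons (2 * n + 3),
            List.cons_injective.comp List.cons_injective⟩ := by
  ext l
  simp only [Finset.mem_union, Finset.mem_map, Function.Embedding.coeFn_mk, mem_basalFinset]
  constructor
  · rintro ⟨hlen, hl, hhead⟩
    obtain ⟨t, rfl⟩ := List.head?_eq_some_iff.mp hhead
    rcases isBasal_cons_iff.mp hl with ⟨ht, hthead⟩ | ⟨u, rfl, hu, huhead⟩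
    · exact .inl ⟨t, ⟨by simpa using hlen, ht, hthead⟩, rfl⟩
    · exact .inr ⟨u, ⟨by simp only [List.length_cons] at hlen; omega, hu, huhead⟩, rfl⟩
  · rintro (⟨t, ⟨rfl, ht, hthead⟩, rfl⟩ | ⟨u, ⟨hlen, hu, huhead⟩, rfl⟩)
    · exact ⟨rfl, isBasal_cons_iff.mpr (.inl ⟨ht, hthead⟩), rfl⟩
    · have := List.length_pos_of_ne_nil hu.ne_nil
      exact ⟨by simp only [Function.comp_apply, List.length_cons]; omega,
        isBasal_cons_iff.mpr (.inr ⟨u, rfl, hu, huhead⟩), rfl⟩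

lemma s_succ_two_mul_add_four (d n : ℕ) :
    s (d + 1) (2 * n + 4) =
      X ^ (2 * n + 4) * s d (2 * n + 2) + X ^ (4 * n + 7) * s (d - 1) (2 * n + 2) := by
  have hdisj :
      Disjoint ((basalFinset d (2 * n + 2)).map ⟨List.cons (2 * n + 4), List.cons_injective⟩)
        ((basalFinset (d - 1) (2 * n + 2)).map
          ⟨List.cons (2 * n + 4) ∘ List.cons (2 * n + 3),
            List.cons_injective.comp List.cons_injective⟩) := by
    simp only [Finset.disjoint_left, Finset.mem_map, Function.Embedding.coeFn_mk,
      Function.comp_apply]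
    rintro _ ⟨t, ht, rfl⟩ ⟨u, -, hu⟩
    obtain ⟨-, -, hhead⟩ := mem_basalFinset.mp ht
    rw [List.cons_inj_right] at hu
    rw [← hu] at hhead
    simp at hhead
  rw [s_eq_sum_basalFinset, basalFinset_succ_two_mul_add_four, Finset.sum_union hdisj,
    Finset.sum_map, Finset.sum_map, s_eq_sum_basalFinset, s_eq_sum_basalFinset, Finset.mul_sum,
    Finset.mul_sum]
  congr 1 <;> refine Finset.sum_congr rfl fun l _ => ?_ <;>
    simp only [Function.Embedding.coeFn_mk, Function.comp_apply, List.sum_cons] <;> ring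

lemma s_zero_left (m : ℕ) : s 0 m = 0 := by
  simp [s, IsBasal, IsEBP]

lemma s_zero_right (d : ℕ) : s d 0 = 0 := by
  refine (s_eq_sum_basalFinset d 0).trans (Finset.sum_eq_zero fun l hl => ?_)
  obtain ⟨-, hl, hhead⟩ := mem_basalFinset.mp hl
  obtain ⟨t, rfl⟩ := List.head?_eq_some_iff.mp hhead
  exact absurd (hl.two_le 0 List.mem_cons_self) (by omega)

lemma s_two (d : ℕ) : s d 2 = if d = 1 then X ^ 2 else 0 := by
  have hmem (l : List ℕ) : l ∈ basalFinset d 2 ↔ d = 1 ∧ l = [2] := by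
    rw [mem_basalFinset]
    constructor
    · rintro ⟨rfl, hl, hhead⟩
      obtain ⟨_ | ⟨b, t⟩, rfl⟩ := List.head?_eq_some_iff.mp hhead
      · exact ⟨rfl, rfl⟩
      obtain ⟨hb, -, -, ht⟩ := isBasal_cons_cons.mp hl
      exact absurd (ht.two_le b List.mem_cons_self) (by omega)
    · rintro ⟨rfl, rfl⟩
      exact ⟨rfl, isBasal_singleton.mpr rfl, rfl⟩
  rw [s_eq_sum_basalFinset]
  split_ifs with hd
  · rw [Finset.sum_eq_single_of_mem [2] ((hmem _).mpr ⟨hd, rfl⟩)]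
    · rfl
    · exact fun l hl hne => absurd ((hmem l).mp hl).2 hne
  · exact Finset.sum_eq_zero fun l hl => absurd ((hmem l).mp hl).1 hd

lemma s_two_mul_add_two_eq_zero_of_le : ∀ {d n : ℕ}, d ≤ n → s d (2 * n + 2) = 0
  | 0, _, _ => s_zero_left _
  | _ + 1, 0, h => absurd h (by omega)
  | d + 1, n + 1, h => by
    rw [show 2 * (n + 1) + 2 = 2 * n + 4 by ring, s_succ_two_mul_add_four,
      s_two_mul_add_two_eq_zero_of_le (by omega), s_two_mul_add_two_eq_zero_of_le (by omega)]
    ring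

theorem s_eq_X_pow_mul_gaussBinom (n j : ℕ) :
    s (n + 1 + j) (2 * n + 2) =
      X ^ ((n + 1) * (n + 2) + j * (j + 2)) * gaussBinom (X ^ 2 : ℤ[X]) n j := by
  induction n generalizing j with
  | zero =>
    rw [s_two]
    cases j with
    | zero => simp
    | succ j => simp [gaussBinom]
  | succ n ih =>
    rw [show n + 1 + 1 + j = n + 1 + j + 1 by ring, show 2 * (n + 1) + 2 = 2 * n + 4 by ring,
      s_succ_two_mul_add_four, ih]
    cases j with
    | zero =>
      rw [show n + 1 + 0 - 1 = n by omega, s_two_mul_add_two_eq_zero_of_le le_rfl,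
        gaussBinom_zero_right, gaussBinom_zero_right]
      ring
    | succ j =>
      rw [show n + 1 + (j + 1) - 1 = n + 1 + j by omega, ih, gaussBinom_succ_succ]
      obtain hjn | ⟨a, rfl⟩ : n < j ∨ ∃ a, n = j + a :=
        (lt_or_ge n j).imp_right fun h => ⟨n - j, by omega⟩
      · rw [gaussBinom_eq_zero_of_lt _ hjn]
        ring
      · rw [show j + a - j = a by omega]
        ring

lemma prod_one_sub_X_pow_two_mul_eq_qPochhammer (k : ℕ) :
    ∏ i ∈ Finset.Icc 1 k, (1 - (X : ℤ[X]) ^ (2 * i)) = qPochhammer (X ^ 2 : ℤ[X]) k := by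
  simp only [qPochhammer, pow_mul]

/-- `s(d, 2n) = 0` unless `n ≤ d ≤ 2n−1`, and for `n ≤ d ≤ 2n−1` one has, in `ℤ[q]`:
`s(d,2n)·∏_{i=1}^{2n−d−1}(1−q^{2i})·∏_{i=1}^{d−n}(1−q^{2i})
  = q^{2n²−2dn−n+d²+2d}·∏_{i=1}^{n−1}(1−q^{2i})`,
i.e. `s(d,2n)` equals `q^{2n²−2dn−n+d²+2d}` times the Gaussian binomial
coefficient `[n−1 choose 2n−d−1]` in the variable `q²`. -/
theorem s_even_closed_form :
    (∀ d n : ℕ, ¬(n ≤ d ∧ d + 1 ≤ 2 * n) → s d (2 * n) = 0) ∧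
    (∀ d n : ℕ, n ≤ d → d + 1 ≤ 2 * n →
      s d (2 * n) * (∏ i ∈ Finset.Icc 1 (2 * n - d - 1), (1 - (X : Polynomial ℤ) ^ (2 * i))) *
          (∏ i ∈ Finset.Icc 1 (d - n), (1 - (X : Polynomial ℤ) ^ (2 * i))) =
        X ^ (2 * n ^ 2 + d ^ 2 + 2 * d - 2 * d * n - n) *
          ∏ i ∈ Finset.Icc 1 (n - 1), (1 - (X : Polynomial ℤ) ^ (2 * i))) := by
  refine ⟨fun d n h => ?_, fun d n h₁ h₂ => ?_⟩
  · obtain _ | n := n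
    · exact s_zero_right d
    rw [show 2 * (n + 1) = 2 * n + 2 by ring]
    obtain hd | ⟨j, rfl⟩ : d ≤ n ∨ ∃ j, d = n + 1 + j :=
      (le_or_gt d n).imp_right fun h => ⟨d - (n + 1), by omega⟩
    · exact s_two_mul_add_two_eq_zero_of_le hd
    · rw [s_eq_X_pow_mul_gaussBinom, gaussBinom_eq_zero_of_lt _ (by omega), mul_zero]
  · obtain ⟨n, rfl⟩ : ∃ m, n = m + 1 := ⟨n - 1, by omega⟩
    obtain ⟨j, rfl⟩ : ∃ j, d = n + 1 + j := ⟨d - (n + 1), by omega⟩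
    have hexp : 2 * (n + 1) ^ 2 + (n + 1 + j) ^ 2 + 2 * (n + 1 + j) - 2 * (n + 1 + j) * (n + 1)
        - (n + 1) = (n + 1) * (n + 2) + j * (j + 2) := by
      rw [Nat.sub_sub]
      exact Nat.sub_eq_of_eq_add (by ring)
    rw [show 2 * (n + 1) = 2 * n + 2 by ring, show 2 * n + 2 - (n + 1 + j) - 1 = n - j by omega,
      show n + 1 + j - (n + 1) = j by omega, Nat.add_sub_cancel, hexp, s_eq_X_pow_mul_gaussBinom]
    simp only [prod_one_sub_X_pow_two_mul_eq_qPochhammer]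
    rw [← gaussBinom_mul_qPochhammer_mul_qPochhammer _ (show j ≤ n by omega)]
    ring
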